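/- arXiv:2309.09134 — 3 statements merged into one kernel-verified Lean document; each statement's English description precedes it below -/
import Mathlib

section
/- Let P, Q be Bayes nets over a common DAG with alphabet [ℓ], and let L be a local partial coupling of P and Q (a Bayes net over the same DAG on pairs (X_i,Y_i) with Pr[(X_i,Y_i)=(b,b) | parents=(c₁,c₂)] = min(P_{i|Π(i)}(b|c₁), Q_{i|Π(i)}(b|c₂)) and X ∼ P). Then for every w ∈ [ℓ]^n, P(w) − ∏_{i=1}^n min(P_{i|Π(i)}(w_i|w_{Π(i)}), Q_{i|Π(i)}(w_i|w_{Π(i)})) = Pr_L[X = w, Y ≠ w]. -/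
/-! Split the event `X = w` according to whether `Y = w`. The part `Y = w` is the single
configuration `z = (w, w)`, whose `L`-weight is `∏ i, min (P_i …) (Q_i …)` by the diagonal
condition, and the whole event has probability `P(w)` since `X ∼ P`. -/

theorem fst_comp_eq_and_snd_comp_eq_iff {ι α β : Type*} {z : ι → α × β} {x : ι → α}
    {y : ι → β} :
    ((fun j => (z j).1) = x ∧ (fun j => (z j).2) = y) ↔ z = fun j => (x j, y j) := by
  simp only [funext_iff, ← forall_and, Prod.ext_iff]

theorem g_eq_prob_X_eq_Y_neq_general {n ℓ : ℕ}
    (Pc Qc : Fin n → Fin ℓ → (Fin n → Fin ℓ) → ℝ)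
    (Lc : Fin n → Fin ℓ × Fin ℓ → (Fin n → Fin ℓ × Fin ℓ) → ℝ)
    (hdiag : ∀ i b z, Lc i (b, b) z =
      min (Pc i b (fun j => (z j).1)) (Qc i b (fun j => (z j).2)))
    (hXmarg : ∀ w : Fin n → Fin ℓ,
      ∑ z ∈ Finset.univ.filter
          (fun z : Fin n → Fin ℓ × Fin ℓ => (fun j => (z j).1) = w),
        ∏ i, Lc i (z i) z
      = ∏ i, Pc i (w i) w)
    (w : Fin n → Fin ℓ) :
    (∏ i, Pc i (w i) w) - (∏ i, min (Pc i (w i) w) (Qc i (w i) w))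
    = ∑ z ∈ Finset.univ.filter
        (fun z : Fin n → Fin ℓ × Fin ℓ =>
          (fun j => (z j).1) = w ∧ (fun j => (z j).2) ≠ w),
        ∏ i, Lc i (z i) z := by
  have hdiagonal : ∑ z ∈ Finset.univ.filter (fun z : Fin n → Fin ℓ × Fin ℓ =>
      (fun j => (z j).1) = w ∧ (fun j => (z j).2) = w), ∏ i, Lc i (z i) z
      = ∏ i, min (Pc i (w i) w) (Qc i (w i) w) := by
    rw [Finset.filter_congr fun z _ => fst_comp_eq_and_snd_comp_eq_iff, Finset.filter_eq',
      if_pos (Finset.mem_univ _), Finset.sum_singleton]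
    exact Finset.prod_congr rfl fun i _ => hdiag i (w i) _
  rw [← hXmarg w, ← hdiagonal, ← Finset.sum_filter_add_sum_filter_not
    (Finset.univ.filter fun z : Fin n → Fin ℓ × Fin ℓ => (fun j => (z j).1) = w)
    (fun z => (fun j => (z j).2) = w), Finset.filter_filter, Finset.filter_filter,
    add_sub_cancel_left]

/-- For a local partial coupling L of Bayes nets P and Q over a
common DAG (L has the diagonal CPT condition and X-marginal equal to P), for
every w: P(w) − ∏_i min(Pc i (w_i|w), Qc i (w_i|w)) = Pr_L[X = w, Y ≠ w]. -/
theorem g_eq_prob_X_eq_Y_neq {n ℓ : ℕ}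
    (Pc Qc : Fin n → Fin ℓ → (Fin n → Fin ℓ) → ℝ)
    (Lc : Fin n → Fin ℓ × Fin ℓ → (Fin n → Fin ℓ × Fin ℓ) → ℝ)
    (hL0 : ∀ i v z, 0 ≤ Lc i v z)
    (hdiag : ∀ i b z, Lc i (b, b) z =
      min (Pc i b (fun j => (z j).1)) (Qc i b (fun j => (z j).2)))
    (hXmarg : ∀ w : Fin n → Fin ℓ,
      ∑ z ∈ Finset.univ.filter
          (fun z : Fin n → Fin ℓ × Fin ℓ => (fun j => (z j).1) = w),
        ∏ i, Lc i (z i) z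
      = ∏ i, Pc i (w i) w)
    (w : Fin n → Fin ℓ) :
    (∏ i, Pc i (w i) w) - (∏ i, min (Pc i (w i) w) (Qc i (w i) w))
    = ∑ z ∈ Finset.univ.filter
        (fun z : Fin n → Fin ℓ × Fin ℓ =>
          (fun j => (z j).1) = w ∧ (fun j => (z j).2) ≠ w),
        ∏ i, Lc i (z i) z :=
  g_eq_prob_X_eq_Y_neq_general Pc Qc Lc hdiag hXmarg w
end

section
/- Let P, Q be Bayes nets over a common DAG with n nodes, and let L be a local partial coupling of P and Q as above. Then Z := Pr_L[X ≠ Y] satisfies Z ≤ 2n · d_TV(P, Q). -/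
/-!
Write `p, q` for the conditionals of `P, Q` and `m = min p q`. On the diagonal `L` has weight
`∏ᵢ mᵢ(w)`, so `Z = ∑_w (∏ᵢ pᵢ(w) - ∏ᵢ mᵢ(w))`. Telescoping the difference of products node by
node, the `i`-th term is `(pᵢ - qᵢ)⁺ ∏_{j<i} mⱼ ∏_{j>i} pⱼ ≤ (pᵢ - qᵢ)⁺ ∏_{j<i} qⱼ ∏_{j>i} pⱼ`,
the positive part of `Hᵢ - Hᵢ₊₁` for the hybrid nets `Hᵢ = q_{<i} p_{≥i}`. By the triangle
inequality through `P` its mass is at most `d(Hᵢ, P) + d(P, Hᵢ₊₁)`, and each of these distances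
compares `P` and `Q` on a prefix of the nodes only, with a common suffix that sums out; so each
is at most `d_TV(P, Q)`.
-/

open Finset

lemma sum_max_zero_sub_comm {β : Type*} (s : Finset β) {f g : β → ℝ}
    (h : ∑ x ∈ s, f x = ∑ x ∈ s, g x) :
    ∑ x ∈ s, max 0 (f x - g x) = ∑ x ∈ s, max 0 (g x - f x) := by
  have hpt : ∀ x, max 0 (f x - g x) = max 0 (g x - f x) + (f x - g x) := by
    intro x
    rcases le_total (f x) (g x) with hfg | hgf
    · rw [max_eq_left (by linarith), max_eq_right (by linarith)]; ring
    · rw [max_eq_right (by linarith), max_eq_left (by linarith)]; ring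
  rw [sum_congr rfl fun x _ => hpt x, sum_add_distrib, sum_sub_distrib, h, sub_self, add_zero]

lemma prod_sub_prod_min_le {ι : Type*} [LinearOrder ι] (s : Finset ι) {x y : ι → ℝ}
    (hx : ∀ i, 0 ≤ x i) (hy : ∀ i, 0 ≤ y i) :
    ∏ i ∈ s, x i - ∏ i ∈ s, min (x i) (y i)
      ≤ ∑ i ∈ s, max 0 (x i - y i) * (∏ j ∈ s with j < i, y j) * ∏ j ∈ s with i < j, x j := by
  have htel := prod_sub_ordered s x fun i => x i - min (x i) (y i)
  simp only [sub_sub_cancel] at htel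
  rw [htel, sub_sub_cancel]
  refine sum_le_sum fun i _ => ?_
  have hgap : x i - min (x i) (y i) = max 0 (x i - y i) := by
    rcases le_total (x i) (y i) with hxy | hyx
    · rw [min_eq_left hxy, max_eq_left (by linarith), sub_self]
    · rw [min_eq_right hyx, max_eq_right (by linarith)]
  rw [hgap]
  gcongr with j
  · exact prod_nonneg fun j _ => hx j
  · exact fun j _ => le_min (hx j) (hy j)
  · exact min_le_right _ _

lemma max_zero_sub_mul_mul_le {A B x y C : ℝ} (hA : 0 ≤ A) (hx : 0 ≤ x) (hC : 0 ≤ C) :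
    max 0 (x - y) * A * C ≤ max 0 (A - B) * (x * C) + max 0 (x * B - y * A) * C := by
  have htri : max 0 (x - y) * A ≤ max 0 (A - B) * x + max 0 (x * B - y * A) := by
    rw [max_mul_of_nonneg _ _ hA, max_mul_of_nonneg _ _ hx, zero_mul, zero_mul]
    refine max_le (add_nonneg (le_max_left _ _) (le_max_left _ _)) ?_
    linarith [le_max_right 0 ((A - B) * x), le_max_right 0 (x * B - y * A)]
  calc max 0 (x - y) * A * C ≤ (max 0 (A - B) * x + max 0 (x * B - y * A)) * C :=
        mul_le_mul_of_nonneg_right htri hC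
    _ = _ := by ring

lemma sum_filter_fst_eq_snd {ι α M : Type*} [Fintype ι] [DecidableEq ι] [Fintype α]
    [DecidableEq α] [AddCommMonoid M] (F : (ι → α × α) → M) :
    ∑ z with (fun j => (z j).1) = (fun j => (z j).2), F z
      = ∑ w : ι → α, F fun j => (w j, w j) := by
  symm
  refine sum_nbij' (fun w j => (w j, w j)) (fun z j => (z j).1) (by simp) (by simp)
    (fun _ _ => rfl) (fun z hz => ?_) (fun _ _ => rfl)
  simp only [mem_filter, mem_univ, true_and] at hz
  funext j
  exact Prod.ext rfl (congrFun hz j)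

section CausalKernel

variable {ι α : Type*} [Fintype ι] [LinearOrder ι] [Fintype α] [DecidableEq α]

/-- `K i · w` is the (possibly signed) conditional law of node `i` given the configuration `w`, of
which it may only read the topologically earlier nodes. -/
structure IsCausalKernel (K : ι → α → (ι → α) → ℝ) : Prop where
  sum_eq_one : ∀ i w, ∑ a, K i a w = 1
  congr_past : ∀ i a w w', (∀ j, j < i → w j = w' j) → K i a w = K i a w'

def cylinder (S : Finset ι) (u : ι → α) : Finset (ι → α) :=
  univ.filter fun w => ∀ j ∈ S, w j = u j

@[simp]
lemma mem_cylinder {S : Finset ι} {u w : ι → α} : w ∈ cylinder S u ↔ ∀ j ∈ S, w j = u j := by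
  simp [cylinder]

lemma mem_cylinder_comm {S : Finset ι} {u w : ι → α} : w ∈ cylinder S u ↔ u ∈ cylinder S w := by
  simp only [mem_cylinder, eq_comm]

namespace IsCausalKernel

variable {K : ι → α → (ι → α) → ℝ}

lemma sum_prod_cylinder_compl (hK : IsCausalKernel K) (T : Finset ι) (u : ι → α) :
    ∑ w ∈ cylinder Tᶜ u, ∏ j ∈ T, K j (w j) w = 1 := by
  induction T using Finset.induction_on_min generalizing u with
  | empty =>
    have : cylinder (∅ : Finset ι)ᶜ u = {u} := by
      ext w; simp [funext_iff]
    rw [this, sum_singleton, prod_empty]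
  | insert a s has ih =>
    have ha : a ∉ s := fun h => lt_irrefl a (has a h)
    rw [← sum_fiberwise _ (fun w => w a), ← hK.sum_eq_one a u]
    refine sum_congr rfl fun b _ => ?_
    have hfib : (cylinder (insert a s)ᶜ u).filter (fun w => w a = b) =
        cylinder sᶜ (Function.update u a b) := by
      ext w
      simp only [mem_filter, mem_cylinder, mem_compl, mem_insert, not_or]
      constructor
      · rintro ⟨hw, hwa⟩ j hj
        by_cases hja : j = a
        · subst hja; simpa using hwa
        · rw [Function.update_of_ne hja]; exact hw j ⟨hja, hj⟩
      · intro hw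
        refine ⟨fun j hj => ?_, by simpa using hw a ha⟩
        simpa [Function.update_of_ne hj.1] using hw j hj.2
    have hKa : ∀ w ∈ cylinder sᶜ (Function.update u a b), K a (w a) w = K a b u := by
      intro w hw
      rw [mem_cylinder] at hw
      rw [show w a = b by simpa using hw a (by simpa using ha)]
      refine hK.congr_past a b w u fun j hj => ?_
      have hjs : j ∉ s := fun h => (has j h).not_gt hj
      simpa [Function.update_of_ne hj.ne] using hw j (by simpa using hjs)
    rw [hfib, ← mul_one (K a b u), ← ih (Function.update u a b), mul_sum]
    refine sum_congr rfl fun w hw => ?_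
    rw [prod_insert ha, hKa w hw]

lemma sum_prod_eq_one (hK : IsCausalKernel K) [Nonempty (ι → α)] :
    ∑ w, ∏ i, K i (w i) w = 1 := by
  obtain ⟨u⟩ := ‹Nonempty (ι → α)›
  have huniv : cylinder (univ : Finset ι)ᶜ u = univ := by ext; simp
  simpa only [huniv] using hK.sum_prod_cylinder_compl univ u

lemma prod_eq_of_mem_cylinder (hK : IsCausalKernel K) {S : Finset ι}
    (hS : ∀ i ∈ S, ∀ j < i, j ∈ S) {u w : ι → α} (hw : w ∈ cylinder S u) :
    ∏ j ∈ S, K j (w j) w = ∏ j ∈ S, K j (u j) u := by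
  rw [mem_cylinder] at hw
  refine prod_congr rfl fun i hi => ?_
  rw [hw i hi]
  exact hK.congr_past i (u i) w u fun j hj => hw j (hS i hi j hj)

lemma sum_cylinder_prod (hK : IsCausalKernel K) {S : Finset ι}
    (hS : ∀ i ∈ S, ∀ j < i, j ∈ S) (u : ι → α) :
    ∑ w ∈ cylinder S u, ∏ j, K j (w j) w = ∏ j ∈ S, K j (u j) u := by
  have hsuffix := hK.sum_prod_cylinder_compl Sᶜ u
  rw [compl_compl] at hsuffix
  calc ∑ w ∈ cylinder S u, ∏ j, K j (w j) w
      = ∑ w ∈ cylinder S u, (∏ j ∈ S, K j (u j) u) * ∏ j ∈ Sᶜ, K j (w j) w :=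
        sum_congr rfl fun w hw => by
          rw [← prod_mul_prod_compl S, hK.prod_eq_of_mem_cylinder hS hw]
    _ = ∏ j ∈ S, K j (u j) u := by rw [← mul_sum, hsuffix, mul_one]

end IsCausalKernel

/-- For a lower set `S` of nodes the prefix products are the marginals of `a` and `b` on `S`:
marginalising does not increase total variation. -/
lemma sum_max_zero_prefix_sub_mul_le {a b c : ι → α → (ι → α) → ℝ}
    (ha : IsCausalKernel a) (hb : IsCausalKernel b) (hc : IsCausalKernel c)
    (hc0 : ∀ i x w, 0 ≤ c i x w) {S : Finset ι} (hS : ∀ i ∈ S, ∀ j < i, j ∈ S) :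
    ∑ w, max 0 ((∏ j ∈ S, a j (w j) w) - ∏ j ∈ S, b j (w j) w) * ∏ j ∈ Sᶜ, c j (w j) w
      ≤ ∑ w, max 0 ((∏ j, a j (w j) w) - ∏ j, b j (w j) w) := by
  set D : (ι → α) → ℝ := fun w => max 0 ((∏ j, a j (w j) w) - ∏ j, b j (w j) w)
  have hcyl : ∀ u, max 0 ((∏ j ∈ S, a j (u j) u) - ∏ j ∈ S, b j (u j) u)
      ≤ ∑ w ∈ cylinder S u, D w := by
    intro u
    rw [← ha.sum_cylinder_prod hS, ← hb.sum_cylinder_prod hS, ← sum_sub_distrib]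
    exact max_le (sum_nonneg fun _ _ => le_max_left _ _) (sum_le_sum fun _ _ => le_max_right _ _)
  calc _ ≤ ∑ u, ∑ w ∈ cylinder S u, (∏ j ∈ Sᶜ, c j (u j) u) * D w := by
        refine sum_le_sum fun u _ => ?_
        rw [← mul_sum, mul_comm]
        exact mul_le_mul_of_nonneg_left (hcyl u) (prod_nonneg fun j _ => hc0 j (u j) u)
    _ = ∑ w, ∑ u ∈ cylinder S w, (∏ j ∈ Sᶜ, c j (u j) u) * D w :=
        sum_comm' fun u w => by
          simp only [mem_univ, true_and, and_true]
          exact mem_cylinder_comm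
    _ = ∑ w, D w := by
        refine sum_congr rfl fun w _ => ?_
        have hsuffix := hc.sum_prod_cylinder_compl Sᶜ w
        rw [compl_compl] at hsuffix
        rw [← sum_mul, hsuffix, one_mul]

lemma sum_max_zero_sub_mul_le_two_mul {P Q : ι → α → (ι → α) → ℝ} [Nonempty (ι → α)]
    (hP : IsCausalKernel P) (hQ : IsCausalKernel Q)
    (hP0 : ∀ i x w, 0 ≤ P i x w) (hQ0 : ∀ i x w, 0 ≤ Q i x w) (i : ι) :
    ∑ w, max 0 (P i (w i) w - Q i (w i) w) * (∏ j with j < i, Q j (w j) w)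
        * ∏ j with i < j, P j (w j) w
      ≤ 2 * ∑ w, max 0 ((∏ j, P j (w j) w) - ∏ j, Q j (w j) w) := by
  set before : Finset ι := {j | j < i}
  set upTo : Finset ι := {j | j ≤ i}
  set after : Finset ι := {j | i < j}
  have hupTo : upTo = insert i before := by ext j; simp [upTo, before, le_iff_lt_or_eq, or_comm]
  have hbefore_compl : beforeᶜ = insert i after := by
    ext j; simp [before, after, le_iff_lt_or_eq, eq_comm, or_comm]
  have hupTo_compl : upToᶜ = after := by ext j; simp [upTo, after]
  calc _ ≤ ∑ w, (max 0 ((∏ j ∈ before, Q j (w j) w) - ∏ j ∈ before, P j (w j) w)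
            * ∏ j ∈ beforeᶜ, P j (w j) w
          + max 0 ((∏ j ∈ upTo, P j (w j) w) - ∏ j ∈ upTo, Q j (w j) w)
            * ∏ j ∈ upToᶜ, P j (w j) w) := by
        refine sum_le_sum fun w _ => ?_
        rw [hbefore_compl, hupTo_compl, hupTo, prod_insert (by simp [after]),
          prod_insert (by simp [before]), prod_insert (by simp [before])]
        exact max_zero_sub_mul_mul_le (prod_nonneg fun j _ => hQ0 j (w j) w) (hP0 i (w i) w)
          (prod_nonneg fun j _ => hP0 j (w j) w)
    _ ≤ ∑ w, max 0 ((∏ j, Q j (w j) w) - ∏ j, P j (w j) w)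
          + ∑ w, max 0 ((∏ j, P j (w j) w) - ∏ j, Q j (w j) w) := by
        rw [sum_add_distrib]
        exact add_le_add
          (sum_max_zero_prefix_sub_mul_le hQ hP hP hP0 fun k hk j hjk => by
            simp only [before, mem_filter, mem_univ, true_and] at hk ⊢; exact hjk.trans hk)
          (sum_max_zero_prefix_sub_mul_le hP hQ hP hP0 fun k hk j hjk => by
            simp only [upTo, mem_filter, mem_univ, true_and] at hk ⊢; exact hjk.le.trans hk)
    _ = _ := by
        rw [sum_max_zero_sub_comm univ (hQ.sum_prod_eq_one.trans hP.sum_prod_eq_one.symm)]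
        ring

lemma IsCausalKernel.sum_prod_filter_ne {L : ι → α × α → (ι → α × α) → ℝ}
    [Nonempty (ι → α × α)] (hL : IsCausalKernel L) :
    ∑ z with (fun j => (z j).1) ≠ (fun j => (z j).2), ∏ i, L i (z i) z
      = 1 - ∑ w : ι → α, ∏ i, L i (w i, w i) fun j => (w j, w j) := by
  rw [← hL.sum_prod_eq_one, ← sum_filter_fst_eq_snd fun z => ∏ i, L i (z i) z,
    eq_sub_iff_add_eq, add_comm]
  exact sum_filter_add_sum_filter_not _ _ _

end CausalKernel

theorem Z_le_two_n_tv_general {n ℓ : ℕ}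
    (Pc Qc : Fin n → Fin ℓ → (Fin n → Fin ℓ) → ℝ)
    (Lc : Fin n → Fin ℓ × Fin ℓ → (Fin n → Fin ℓ × Fin ℓ) → ℝ)
    (hP0 : ∀ i c w, 0 ≤ Pc i c w) (hP1 : ∀ i w, ∑ c, Pc i c w = 1)
    (hQ0 : ∀ i c w, 0 ≤ Qc i c w) (hQ1 : ∀ i w, ∑ c, Qc i c w = 1)
    (hL1 : ∀ i z, ∑ v, Lc i v z = 1)
    (hPloc : ∀ i c w w', (∀ j, j < i → w j = w' j) → Pc i c w = Pc i c w')
    (hQloc : ∀ i c w w', (∀ j, j < i → w j = w' j) → Qc i c w = Qc i c w')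
    (hLloc : ∀ i v z z', (∀ j, j < i → z j = z' j) → Lc i v z = Lc i v z')
    (hdiag : ∀ i b z, Lc i (b, b) z =
      min (Pc i b (fun j => (z j).1)) (Qc i b (fun j => (z j).2))) :
    ∑ z ∈ Finset.univ.filter
        (fun z : Fin n → Fin ℓ × Fin ℓ =>
          (fun j => (z j).1) ≠ (fun j => (z j).2)),
      ∏ i, Lc i (z i) z
    ≤ 2 * n * ∑ w : Fin n → Fin ℓ,
        max 0 ((∏ i, Pc i (w i) w) - ∏ i, Qc i (w i) w) := by
  rcases isEmpty_or_nonempty (Fin n → Fin ℓ) with hempty | hne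
  · have : IsEmpty (Fin n → Fin ℓ × Fin ℓ) := ⟨fun z => hempty.false fun j => (z j).1⟩
    simp
  have : Nonempty (Fin n → Fin ℓ × Fin ℓ) := hne.map fun u j => (u j, u j)
  have hP : IsCausalKernel Pc := ⟨hP1, hPloc⟩
  have hQ : IsCausalKernel Qc := ⟨hQ1, hQloc⟩
  rw [IsCausalKernel.sum_prod_filter_ne ⟨hL1, hLloc⟩, ← hP.sum_prod_eq_one, ← sum_sub_distrib]
  simp only [hdiag]
  calc ∑ w, ((∏ i, Pc i (w i) w) - ∏ i, min (Pc i (w i) w) (Qc i (w i) w))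
      ≤ ∑ w, ∑ i, max 0 (Pc i (w i) w - Qc i (w i) w) * (∏ j with j < i, Qc j (w j) w)
          * ∏ j with i < j, Pc j (w j) w :=
        sum_le_sum fun w _ =>
          prod_sub_prod_min_le univ (fun i => hP0 i (w i) w) (fun i => hQ0 i (w i) w)
    _ = ∑ i, ∑ w, max 0 (Pc i (w i) w - Qc i (w i) w) * (∏ j with j < i, Qc j (w j) w)
          * ∏ j with i < j, Pc j (w j) w := sum_comm
    _ ≤ ∑ _i : Fin n, 2 * ∑ w, max 0 ((∏ j, Pc j (w j) w) - ∏ j, Qc j (w j) w) :=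
        sum_le_sum fun i _ => sum_max_zero_sub_mul_le_two_mul hP hQ hP0 hQ0 i
    _ = _ := by rw [sum_const, card_univ, Fintype.card_fin, nsmul_eq_mul]; ring

/-- For Bayes nets P, Q over a common (topologically ordered) DAG
with n nodes and a local partial coupling L of P and Q,
Z = Pr_L[X ≠ Y] ≤ 2n · d_TV(P,Q), where d_TV(P,Q) = Σ_w max(0, P(w) − Q(w)). -/
theorem Z_le_two_n_tv {n ℓ : ℕ}
    (Pc Qc : Fin n → Fin ℓ → (Fin n → Fin ℓ) → ℝ)
    (Lc : Fin n → Fin ℓ × Fin ℓ → (Fin n → Fin ℓ × Fin ℓ) → ℝ)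
    (hP0 : ∀ i c w, 0 ≤ Pc i c w) (hP1 : ∀ i w, ∑ c, Pc i c w = 1)
    (hQ0 : ∀ i c w, 0 ≤ Qc i c w) (hQ1 : ∀ i w, ∑ c, Qc i c w = 1)
    (hL0 : ∀ i v z, 0 ≤ Lc i v z) (hL1 : ∀ i z, ∑ v, Lc i v z = 1)
    (hPloc : ∀ i c w w', (∀ j, j < i → w j = w' j) → Pc i c w = Pc i c w')
    (hQloc : ∀ i c w w', (∀ j, j < i → w j = w' j) → Qc i c w = Qc i c w')
    (hLloc : ∀ i v z z', (∀ j, j < i → z j = z' j) → Lc i v z = Lc i v z')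
    (hdiag : ∀ i b z, Lc i (b, b) z =
      min (Pc i b (fun j => (z j).1)) (Qc i b (fun j => (z j).2)))
    (hmarg : ∀ i b z, ∑ y, Lc i (b, y) z = Pc i b (fun j => (z j).1)) :
    ∑ z ∈ Finset.univ.filter
        (fun z : Fin n → Fin ℓ × Fin ℓ =>
          (fun j => (z j).1) ≠ (fun j => (z j).2)),
      ∏ i, Lc i (z i) z
    ≤ 2 * n * ∑ w : Fin n → Fin ℓ,
        max 0 ((∏ i, Pc i (w i) w) - ∏ i, Qc i (w i) w) :=
  Z_le_two_n_tv_general Pc Qc Lc hP0 hP1 hQ0 hQ1 hL1 hPloc hQloc hLloc hdiag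
end

section
/- Let F : {0,1}^n → {0,1} be a Boolean function computed by a circuit with m gates, and let P be the associated Bayes net distribution on {0,1}^{n+m+1} in which X ∈ {0,1}^n is uniform, Y = f(X) ∈ {0,1}^m records all gate values deterministically, and Z is the OR of the output gate Y_m with an independent uniform random bit. Then d_TV(P, U) = |A|/2^{n+m+1} + (1 − 1/2^m), where U is uniform on {0,1}^{n+m+1} and A = {x ∈ {0,1}^n : F(x) = 1}. -/
/-!
For a fixed input `x` only the two points `(x, f x, z)` carry mass; every other point of the
fiber over `x` contributes exactly the uniform mass `u`. At `(x, f x, ·)` the two contributions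
add up to `2⁻ⁿ` if `F x = 1` (the mass sits on `z = 1`, the point `z = 0` is empty) and to
`2⁻ⁿ - 2u` if `F x = 0` (both points exceed `u`). Summing over `x` leaves a term `2u` for every
`x ∈ A`, which is the `|A| / 2^(n+m+1)` of the statement.
-/

open Finset

theorem Fintype.sum_eq_add_mul_of_eq_off {β R : Type*} [Fintype β] [DecidableEq β] [Ring R]
    (h : β → R) (b : β) (c : R) (hc : ∀ y ≠ b, h y = c) :
    ∑ y, h y = h b + ((Fintype.card β : R) - 1) * c := by
  rw [Fintype.sum_eq_add_sum_compl b, Finset.sum_congr rfl fun y hy => hc y (by simpa using hy),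
    sum_const, card_compl, card_singleton, nsmul_eq_mul,
    Nat.cast_sub (Fintype.card_pos_iff.mpr ⟨b⟩), Nat.cast_one]

section CircuitNet

variable {α β : Type*} [DecidableEq β]

/-- Mass `p` on each input `x`, placed on `y = f x`, with `z` the OR of `F x` and a fair coin. -/
noncomputable def circuitNetDensity (F : α → Bool) (f : α → β) (p : ℝ) : α × β × Bool → ℝ :=
  fun w => if w.2.1 ≠ f w.1 then 0 else if F w.1 then (if w.2.2 then p else 0) else p / 2

variable (F : α → Bool) (f : α → β) {p u : ℝ}

theorem sum_abs_circuitNetDensity_sub_off_graph (hu : 0 ≤ u) (x : α) {y : β} (hy : y ≠ f x) :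
    ∑ z : Bool, |circuitNetDensity F f p (x, y, z) - u| = 2 * u := by
  simp [circuitNetDensity, hy, abs_of_nonneg hu, two_mul]

theorem sum_abs_circuitNetDensity_sub_on_graph (hu : 0 ≤ u) (hup : u ≤ p / 2) (x : α) :
    ∑ z : Bool, |circuitNetDensity F f p (x, f x, z) - u|
      = p - 2 * u + if F x then 2 * u else 0 := by
  cases hF : F x
  · simp [circuitNetDensity, hF, abs_of_nonneg (sub_nonneg.mpr hup), ← two_mul,
      mul_div_cancel₀]
  · simp [circuitNetDensity, hF, abs_of_nonneg hu,
      abs_of_nonneg (show 0 ≤ p - u by linarith)]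

theorem sum_abs_circuitNetDensity_sub_fiber [Fintype β] (hu : 0 ≤ u) (hup : u ≤ p / 2) (x : α) :
    ∑ yz : β × Bool, |circuitNetDensity F f p (x, yz) - u|
      = p - 2 * u + ((Fintype.card β : ℝ) - 1) * (2 * u) + if F x then 2 * u else 0 := by
  rw [Fintype.sum_prod_type,
    Fintype.sum_eq_add_mul_of_eq_off _ (f x) _
      fun y hy => sum_abs_circuitNetDensity_sub_off_graph F f hu x hy,
    sum_abs_circuitNetDensity_sub_on_graph F f hu hup]
  ring

theorem sum_abs_circuitNetDensity_sub [Fintype α] [Fintype β] (hu : 0 ≤ u) (hup : u ≤ p / 2) :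
    ∑ w, |circuitNetDensity F f p w - u|
      = Fintype.card α * (p - 2 * u + ((Fintype.card β : ℝ) - 1) * (2 * u))
        + #{x | F x = true} * (2 * u) := by
  rw [Fintype.sum_prod_type]
  simp_rw [sum_abs_circuitNetDensity_sub_fiber F f hu hup, sum_add_distrib, ← sum_filter]
  simp only [sum_const, card_univ, nsmul_eq_mul]
  ring

end CircuitNet

/-- Let F : {0,1}^n → {0,1} be computed by a circuit with m gates,
f : {0,1}^n → {0,1}^m listing all gate values (with last gate computing F), and
P the Bayes net distribution on {0,1}^{n+m+1} in which X is uniform, Y = f(X),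
and Z is the OR of Y_m with an independent uniform bit, i.e.
P(x,y,z) = 0 if y ≠ f(x); P(x,f(x),1) = 2^{−n} and P(x,f(x),0) = 0 if F(x)=1;
P(x,f(x),0) = P(x,f(x),1) = 2^{−n−1} if F(x)=0. Then
d_TV(P, U) = |A|/2^{n+m+1} + (1 − 1/2^m), where A = {x : F(x) = 1}. -/
theorem tv_circuit_bayes_net_uniform (n m : ℕ)
    (F : (Fin n → Bool) → Bool) (f : (Fin n → Bool) → (Fin m → Bool))
    (P : (Fin n → Bool) × (Fin m → Bool) × Bool → ℝ)
    (hP : ∀ x y z, P (x, y, z) =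
      if y ≠ f x then 0
      else if F x then (if z then ((2 : ℝ) ^ n)⁻¹ else 0)
      else ((2 : ℝ) ^ (n + 1))⁻¹) :
    (1 / 2) * ∑ w : (Fin n → Bool) × (Fin m → Bool) × Bool,
        |P w - ((2 : ℝ) ^ (n + m + 1))⁻¹|
    = ((Finset.univ.filter (fun x : Fin n → Bool => F x = true)).card : ℝ)
        / 2 ^ (n + m + 1)
      + (1 - 1 / 2 ^ m) := by
  have hP_eq : P = circuitNetDensity F f ((2 : ℝ) ^ n)⁻¹ := by
    funext ⟨x, y, z⟩
    rw [hP, circuitNetDensity, pow_succ, mul_inv, div_eq_mul_inv]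
  have hu_le : ((2 : ℝ) ^ (n + m + 1))⁻¹ ≤ ((2 : ℝ) ^ n)⁻¹ / 2 := by
    rw [div_eq_mul_inv, ← mul_inv, ← pow_succ]
    exact inv_anti₀ (by positivity) (pow_le_pow_right₀ one_le_two (by omega))
  rw [hP_eq, sum_abs_circuitNetDensity_sub F f (by positivity) hu_le]
  simp only [Fintype.card_fun, Fintype.card_fin, Fintype.card_bool, Nat.cast_pow, Nat.cast_ofNat]
  field_simp
  ring
end
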